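/- For every real α > 0, every real t ≥ 0, and every real λ, the characteristic function of the fractional Poisson distribution with parameter t satisfies ∑_{n=0}^∞ e^{iλn} (t^n / n!) E_α^{(n)}(−t) = E_α( t (e^{iλ} − 1) ). -/

import Mathlib

open MeasureTheory Complex

/-- The Mittag-Leffler function `E_α(z) = ∑ₙ zⁿ / Γ(αn+1)`. -/
noncomputable def mittagLeffler (α : ℝ) (z : ℂ) : ℂ :=
  ∑' n : ℕ, z ^ n / (Real.Gamma (α * n + 1) : ℂ)

/-! `E_α` is entire because `1 / Γ(αn+1)` decays faster than any geometric sequence, as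
`Γ(αn+1) ≥ ⌊αn⌋!` and `n ≤ 2q⌊αn⌋` for `q ≥ 1/α`. The characteristic function is then the Taylor
expansion of `E_α` about `-t`, evaluated at `t(e^{iλ} - 1) = -t + te^{iλ}`. -/

open Filter
open scoped Nat

namespace Real

theorem factorial_floor_le_Gamma_add_one {x : ℝ} (hx : 1 ≤ x) :
    (⌊x⌋₊ ! : ℝ) ≤ Gamma (x + 1) := by
  have hfloor : (1 : ℝ) ≤ ⌊x⌋₊ := by exact_mod_cast Nat.le_floor (by exact_mod_cast hx)
  rw [← Gamma_nat_eq_factorial]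
  exact Gamma_strictMonoOn_Ici.monotoneOn (Set.mem_Ici.mpr (by linarith))
    (Set.mem_Ici.mpr (by linarith))
    (by linarith [Nat.floor_le (zero_le_one.trans hx)])

theorem eventually_pow_le_Gamma_mul_add_one {α : ℝ} (hα : 0 < α) (K : ℝ) :
    ∀ᶠ n : ℕ in atTop, K ^ n ≤ Gamma (α * n + 1) := by
  obtain ⟨q, hq⟩ := exists_nat_ge α⁻¹
  have hfloor : Tendsto (fun n : ℕ => ⌊α * n⌋₊) atTop atTop :=
    tendsto_nat_floor_atTop.comp (tendsto_natCast_atTop_atTop.const_mul_atTop hα)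
  filter_upwards [hfloor.eventually
      (FloorSemiring.eventually_mul_pow_lt_factorial_sub 1 (max |K| 1 ^ (2 * q)) 0),
    hfloor.eventually_ge_atTop 1] with n hfac hj
  set j := ⌊α * n⌋₊
  have hαn : 1 ≤ α * n := by
    exact_mod_cast (Nat.one_le_cast.mpr hj).trans (Nat.floor_le (by positivity))
  have hn : n ≤ 2 * q * j := by
    have hlt : α * n < j + 1 := Nat.lt_floor_add_one _
    have : (n : ℝ) ≤ 2 * q * j := calc
      (n : ℝ) ≤ q * (α * n) := by
        rw [← mul_assoc]; exact le_mul_of_one_le_left (by positivity) (by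
          rwa [inv_le_iff_one_le_mul₀ hα] at hq)
      _ ≤ q * (j + 1) := by gcongr
      _ ≤ 2 * q * j := by
        nlinarith [(Nat.one_le_cast (α := ℝ)).mpr hj, (Nat.cast_nonneg q : (0 : ℝ) ≤ q)]
    exact_mod_cast this
  calc K ^ n ≤ |K| ^ n := by rw [← abs_pow]; exact le_abs_self _
    _ ≤ max |K| 1 ^ n := by gcongr; exact le_max_left _ _
    _ ≤ max |K| 1 ^ (2 * q * j) := pow_le_pow_right₀ (le_max_right _ _) hn
    _ ≤ (j ! : ℝ) := by rw [pow_mul]; simpa using hfac.le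
    _ ≤ Gamma (α * n + 1) := factorial_floor_le_Gamma_add_one hαn

theorem summable_pow_div_Gamma_mul_add_one {α : ℝ} (hα : 0 < α) (r : ℝ) :
    Summable fun n : ℕ => r ^ n / Gamma (α * n + 1) := by
  set K := 2 * |r| + 1
  refine summable_geometric_two.of_norm_bounded_eventually_nat ?_
  filter_upwards [eventually_pow_le_Gamma_mul_add_one hα K] with n hn
  have hK : 0 < K := by positivity
  calc ‖r ^ n / Gamma (α * n + 1)‖ = |r| ^ n / Gamma (α * n + 1) := by
        rw [norm_div, norm_pow, Real.norm_eq_abs, Real.norm_eq_abs,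
          abs_of_pos (Gamma_pos_of_pos (by positivity))]
    _ ≤ |r| ^ n / K ^ n := by gcongr
    _ ≤ (1 / 2) ^ n := by
        rw [← div_pow]
        exact pow_le_pow_left₀ (by positivity) (by rw [div_le_iff₀ hK]; linarith) n

end Real

open FormalMultilinearSeries

noncomputable def mittagLefflerSeries (α : ℝ) : FormalMultilinearSeries ℂ ℂ ℂ :=
  ofScalars ℂ fun n => ((Real.Gamma (α * n + 1) : ℝ) : ℂ)⁻¹

theorem mittagLefflerSeries_radius_eq_top {α : ℝ} (hα : 0 < α) :
    (mittagLefflerSeries α).radius = ⊤ := by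
  refine radius_eq_top_of_summable_norm _ fun r => ?_
  convert Real.summable_pow_div_Gamma_mul_add_one hα r using 2 with n
  rw [mittagLefflerSeries, ofScalars_norm, norm_inv, Complex.norm_real, Real.norm_eq_abs,
    abs_of_pos (Real.Gamma_pos_of_pos (by positivity)), inv_mul_eq_div]

theorem mittagLeffler_eq_mittagLefflerSeries_sum (α : ℝ) :
    mittagLeffler α = (mittagLefflerSeries α).sum := by
  funext z
  refine tsum_congr fun n => ?_
  rw [mittagLefflerSeries, ofScalars_apply_eq, smul_eq_mul, div_eq_inv_mul]

theorem differentiable_mittagLeffler {α : ℝ} (hα : 0 < α) :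
    Differentiable ℂ (mittagLeffler α) := by
  have hrad := mittagLefflerSeries_radius_eq_top hα
  have h := (mittagLefflerSeries α).hasFPowerSeriesOnBall (by simp [hrad])
  rw [hrad, ← mittagLeffler_eq_mittagLefflerSeries_sum] at h
  rw [← differentiableOn_univ, ← Metric.eball_top (0 : ℂ)]
  exact h.differentiableOn

theorem fractional_poisson_characteristic_function_general
    (α : ℝ) (hα : 0 < α) (t : ℝ) (l : ℝ) :
    HasSum
      (fun n : ℕ => Complex.exp (Complex.I * (l : ℂ) * (n : ℂ)) *
        ((t : ℂ) ^ n / (Nat.factorial n : ℂ)) * iteratedDeriv n (mittagLeffler α) (-(t : ℂ)))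
      (mittagLeffler α ((t : ℂ) * (Complex.exp (Complex.I * (l : ℂ)) - 1))) := by
  refine (Complex.hasSum_taylorSeries_of_entire (differentiable_mittagLeffler hα) (-(t : ℂ))
    ((t : ℂ) * (Complex.exp (Complex.I * l) - 1))).congr_fun fun n => ?_
  have hz : (t : ℂ) * (Complex.exp (Complex.I * l) - 1) - -(t : ℂ) =
      t * Complex.exp (Complex.I * l) := by
    ring
  rw [hz, smul_eq_mul, smul_eq_mul, mul_pow, ← Complex.exp_nat_mul]
  ring_nf

/-- For every `α > 0`, `t ≥ 0` and real `λ`, the characteristic function of the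
fractional Poisson distribution with parameter `t` satisfies
`∑ₙ e^{iλn} (tⁿ/n!) E_α⁽ⁿ⁾(−t) = E_α(t(e^{iλ} − 1))`. -/
theorem fractional_poisson_characteristic_function
    (α : ℝ) (hα : 0 < α) (t : ℝ) (ht : 0 ≤ t) (l : ℝ) :
    HasSum
      (fun n : ℕ => Complex.exp (Complex.I * (l : ℂ) * (n : ℂ)) *
        ((t : ℂ) ^ n / (Nat.factorial n : ℂ)) * iteratedDeriv n (mittagLeffler α) (-(t : ℂ)))
      (mittagLeffler α ((t : ℂ) * (Complex.exp (Complex.I * (l : ℂ)) - 1))) :=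
  fractional_poisson_characteristic_function_general α hα t l
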